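/- The spherical cap discrepancy Δ : (S^{d-1})^N → R is continuous (with respect to the topology inherited from the Euclidean norm on (R^d)^N). -/
import Mathlib


open Real Set
open scoped RealInnerProductSpace

noncomputable section

/-- Normalizing constant `C_d`. -/
def Cd (d : ℕ) : ℝ := (∫ τ in (0:ℝ)..π, Real.sin τ ^ (d - 2))⁻¹

/-- The cap measure `μ^{cap}(t)` on `[-1,1]`. -/
def capM (d : ℕ) (t : ℝ) : ℝ :=
  if 0 ≤ t then Cd d * ∫ τ in (0:ℝ)..Real.arccos t, Real.sin τ ^ (d - 2)
  else 1 - Cd d * ∫ τ in (0:ℝ)..Real.arccos (-t), Real.sin τ ^ (d - 2)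

/-- The empirical measure `μ^{emp}(X,w,t)` of the closed half space `{x | ⟪w,x⟫ ≥ t}`. -/
def empM {d N : ℕ} (X : Fin N → EuclideanSpace ℝ (Fin d)) (w : EuclideanSpace ℝ (Fin d))
    (t : ℝ) : ℝ :=
  (Nat.card {i : Fin N // t ≤ ⟪w, X i⟫} : ℝ) / N

/-- The spherical cap discrepancy `Δ(X)`. -/
def disc {d N : ℕ} (X : Fin N → EuclideanSpace ℝ (Fin d)) : ℝ :=
  sSup {r : ℝ | ∃ w : EuclideanSpace ℝ (Fin d), ‖w‖ = 1 ∧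
    ∃ t ∈ Icc (-1:ℝ) 1, r = |empM X w t - capM d t|}

lemma sinInt_pos (d : ℕ) : 0 < ∫ τ in (0:ℝ)..π, Real.sin τ ^ (d - 2) :=
  integral_sin_pow_pos (d - 2)
lemma Cd_pos (d : ℕ) : 0 < Cd d := inv_pos.mpr (sinInt_pos d)
lemma Cd_mul (d : ℕ) : Cd d * ∫ τ in (0:ℝ)..π, Real.sin τ ^ (d - 2) = 1 :=
  inv_mul_cancel₀ (sinInt_pos d).ne'
lemma sinInt_half (d : ℕ) :
    (∫ τ in (0:ℝ)..π/2, Real.sin τ ^ (d - 2)) = (∫ τ in (0:ℝ)..π, Real.sin τ ^ (d - 2)) / 2 := by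
  have hc : Continuous fun τ : ℝ => Real.sin τ ^ (d - 2) := by continuity
  have h1 : (∫ τ in (0:ℝ)..π, Real.sin τ ^ (d-2)) =
      (∫ τ in (0:ℝ)..π/2, Real.sin τ ^ (d-2)) + ∫ τ in (π/2:ℝ)..π, Real.sin τ ^ (d-2) :=
    (intervalIntegral.integral_add_adjacent_intervals (hc.intervalIntegrable _ _)
      (hc.intervalIntegrable _ _)).symm
  have h2 : (∫ τ in (π/2:ℝ)..π, Real.sin τ ^ (d-2)) = ∫ τ in (0:ℝ)..π/2, Real.sin τ ^ (d-2) := by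
    have := intervalIntegral.integral_comp_sub_left (a := (0:ℝ)) (b := π/2)
      (fun τ => Real.sin τ ^ (d-2)) π
    simp only [Real.sin_pi_sub] at this
    rw [show π - π/2 = π/2 by ring, show π - (0:ℝ) = π by ring] at this
    exact this.symm
  rw [h1, h2]; ring
lemma capM_continuous (d : ℕ) : Continuous (capM d) := by
  have hc : Continuous fun τ : ℝ => Real.sin τ ^ (d - 2) := by continuity
  have hF : Continuous fun s : ℝ => ∫ τ in (0:ℝ)..s, Real.sin τ ^ (d - 2) :=
    intervalIntegral.continuous_primitive (fun a b => hc.intervalIntegrable a b) 0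
  have h1 : Continuous fun t : ℝ =>
      Cd d * ∫ τ in (0:ℝ)..Real.arccos t, Real.sin τ ^ (d - 2) :=
    continuous_const.mul (hF.comp Real.continuous_arccos)
  have h2 : Continuous fun t : ℝ =>
      1 - Cd d * ∫ τ in (0:ℝ)..Real.arccos (-t), Real.sin τ ^ (d - 2) :=
    continuous_const.sub (continuous_const.mul (hF.comp (Real.continuous_arccos.comp continuous_neg)))
  unfold capM
  apply h1.if_le h2 continuous_const continuous_id
  intro t ht
  have ht0 : t = 0 := ht.symm
  subst ht0
  have : Cd d * ∫ τ in (0:ℝ)..Real.arccos 0, Real.sin τ ^ (d - 2) = 1/2 := by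
    rw [Real.arccos_zero, sinInt_half, ← mul_div_assoc, Cd_mul]
  simp only [neg_zero, this]
  norm_num
lemma capM_one (d : ℕ) : capM d 1 = 0 := by
  unfold capM
  rw [if_pos (by norm_num : (0:ℝ) ≤ 1), Real.arccos_one, intervalIntegral.integral_same, mul_zero]
lemma empM_nonneg {d N : ℕ} (X : Fin N → EuclideanSpace ℝ (Fin d)) (w) (t : ℝ) :
    0 ≤ empM X w t := div_nonneg (Nat.cast_nonneg _) (Nat.cast_nonneg _)
lemma empM_le_one {d N : ℕ} (X : Fin N → EuclideanSpace ℝ (Fin d)) (w) (t : ℝ) :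
    empM X w t ≤ 1 := by
  rcases Nat.eq_zero_or_pos N with h | h
  · subst h; simp [empM]
  · apply div_le_one_of_le₀
    · have : Nat.card {i : Fin N // t ≤ ⟪w, X i⟫} ≤ N := by
        classical
        calc Nat.card {i : Fin N // t ≤ ⟪w, X i⟫} ≤ Nat.card (Fin N) :=
              Nat.card_le_card_of_injective Subtype.val Subtype.val_injective
          _ = N := Nat.card_eq_fintype_card.trans (Fintype.card_fin N)
      exact_mod_cast this
    · positivity
lemma empM_mono {d N : ℕ} (X Y : Fin N → EuclideanSpace ℝ (Fin d)) (w v) (t s : ℝ)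
    (h : ∀ i, t ≤ ⟪w, X i⟫ → s ≤ ⟪v, Y i⟫) : empM X w t ≤ empM Y v s := by
  rcases Nat.eq_zero_or_pos N with hN | hN
  · subst hN; simp [empM]
  · unfold empM
    have hcard : Nat.card {i : Fin N // t ≤ ⟪w, X i⟫} ≤ Nat.card {i : Fin N // s ≤ ⟪v, Y i⟫} :=
      Nat.card_le_card_of_injective (fun i => ⟨i.1, h i.1 i.2⟩)
        (fun a b hab => Subtype.ext (by simpa using congrArg Subtype.val hab))
    have h2 : (Nat.card {i : Fin N // t ≤ ⟪w, X i⟫} : ℝ) ≤ Nat.card {i : Fin N // s ≤ ⟪v, Y i⟫} := by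
      exact_mod_cast hcard
    apply div_le_div_of_nonneg_right h2 (by positivity) |>.trans_eq rfl
def discSet {d N : ℕ} (X : Fin N → EuclideanSpace ℝ (Fin d)) : Set ℝ :=
  {r : ℝ | ∃ w : EuclideanSpace ℝ (Fin d), ‖w‖ = 1 ∧
    ∃ t ∈ Icc (-1:ℝ) 1, r = |empM X w t - capM d t|}
lemma disc_eq {d N : ℕ} (X : Fin N → EuclideanSpace ℝ (Fin d)) : disc X = sSup (discSet X) := rfl
lemma discSet_nonempty {d N : ℕ} (hd : 1 ≤ d) (X : Fin N → EuclideanSpace ℝ (Fin d)) :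
    (discSet X).Nonempty := by
  refine ⟨_, EuclideanSpace.single (⟨0, hd⟩ : Fin d) (1:ℝ), ?_, 0, by norm_num, rfl⟩
  rw [EuclideanSpace.norm_single]; norm_num
lemma discSet_bddAbove {d N : ℕ} (X : Fin N → EuclideanSpace ℝ (Fin d)) :
    BddAbove (discSet X) := by
  obtain ⟨C, hC⟩ := (isCompact_Icc (a := (-1:ℝ)) (b := 1)).exists_bound_of_continuousOn
    (capM_continuous d).continuousOn
  exact ⟨1 + C, fun r hr => by
    obtain ⟨w, hw, t, ht, rfl⟩ := hr
    calc |empM X w t - capM d t| ≤ |empM X w t| + |capM d t| := abs_sub _ _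
      _ ≤ 1 + C := add_le_add (abs_le.mpr ⟨by linarith [empM_nonneg X w t], empM_le_one X w t⟩)
          (by simpa using hC t ht)⟩
lemma disc_nonneg {d N : ℕ} (hd : 1 ≤ d) (X : Fin N → EuclideanSpace ℝ (Fin d)) :
    0 ≤ disc X := by
  obtain ⟨r, hr⟩ := discSet_nonempty hd X
  have h0 : 0 ≤ r := by obtain ⟨w, hw, t, ht, rfl⟩ := hr; positivity
  exact h0.trans (le_csSup (discSet_bddAbove X) hr)
lemma le_disc {d N : ℕ} (X : Fin N → EuclideanSpace ℝ (Fin d)) {w : EuclideanSpace ℝ (Fin d)}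
    (hw : ‖w‖ = 1) {t : ℝ} (ht : t ∈ Icc (-1:ℝ) 1) :
    |empM X w t - capM d t| ≤ disc X :=
  le_csSup (discSet_bddAbove X) ⟨w, hw, t, ht, rfl⟩
lemma disc_le_disc_add {d N : ℕ} (hd : 1 ≤ d) {ε δ : ℝ} (hδ : 0 < δ)
    (hω : ∀ s ∈ Icc (-1:ℝ) 1, ∀ t ∈ Icc (-1:ℝ) 1, |s - t| ≤ δ → |capM d s - capM d t| ≤ ε)
    (X X' : Fin N → EuclideanSpace ℝ (Fin d)) (hX : ∀ i, ‖X i‖ = 1)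
    (hclose : ∀ i, ‖X i - X' i‖ ≤ δ) :
    disc X' ≤ disc X + ε := by
  rw [disc_eq]
  apply csSup_le (discSet_nonempty hd X')
  rintro r ⟨w, hw, t, ht, rfl⟩
  have hin : ∀ i, |⟪w, X i⟫ - ⟪w, X' i⟫| ≤ δ := by
    intro i
    calc |⟪w, X i⟫ - ⟪w, X' i⟫| = |⟪w, X i - X' i⟫| := by rw [inner_sub_right]
      _ ≤ ‖w‖ * ‖X i - X' i‖ := abs_real_inner_le_norm _ _
      _ ≤ δ := by rw [hw, one_mul]; exact hclose i
  have hlow : ∀ i, -1 ≤ ⟪w, X i⟫ := by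
    intro i
    have h1 : |⟪w, X i⟫| ≤ 1 := by
      calc |⟪w, X i⟫| ≤ ‖w‖ * ‖X i‖ := abs_real_inner_le_norm _ _
        _ = 1 := by rw [hw, hX i, one_mul]
    linarith [(abs_le.mp h1).1]
  rw [abs_sub_le_iff]
  constructor
  · -- empirical above
    set t₁ := max (t - δ) (-1) with ht₁def
    have ht₁ : t₁ ∈ Icc (-1:ℝ) 1 :=
      ⟨le_max_right _ _, max_le (by linarith [ht.2]) (by norm_num)⟩
    have htt : |t₁ - t| ≤ δ := by
      rw [abs_le]
      constructor
      · have : t - δ ≤ t₁ := le_max_left _ _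
        linarith
      · have : t₁ ≤ t := max_le (by linarith) ht.1
        linarith
    have hmono : empM X' w t ≤ empM X w t₁ := by
      apply empM_mono
      intro i hi
      apply max_le
      · have := (abs_le.mp (hin i)).1
        linarith
      · exact hlow i
    have hd1 : empM X w t₁ - capM d t₁ ≤ disc X :=
      le_trans (le_abs_self _) (le_disc X hw ht₁)
    have hd2 : capM d t₁ - capM d t ≤ ε := le_trans (le_abs_self _) (hω t₁ ht₁ t ht htt)
    linarith
  · -- cap above
    by_cases hcase : t + δ ≤ 1
    · set t₂ := t + δ with ht₂def
      have ht₂ : t₂ ∈ Icc (-1:ℝ) 1 := ⟨by linarith [ht.1], hcase⟩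
      have htt : |t₂ - t| ≤ δ := by rw [abs_le]; constructor <;> simp [ht₂def] <;> linarith
      have hmono : empM X w t₂ ≤ empM X' w t := by
        apply empM_mono
        intro i hi
        have := (abs_le.mp (hin i)).2
        simp only [ht₂def] at hi
        linarith
      have hd1 : capM d t₂ - empM X w t₂ ≤ disc X := by
        calc capM d t₂ - empM X w t₂ ≤ |capM d t₂ - empM X w t₂| := le_abs_self _
          _ = |empM X w t₂ - capM d t₂| := abs_sub_comm _ _
          _ ≤ disc X := le_disc X hw ht₂
      have hd2 : capM d t - capM d t₂ ≤ ε := le_trans (le_abs_self _) (hω t ht t₂ ht₂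
        (by rw [abs_sub_comm]; exact htt))
      linarith
    · have h1 : |t - 1| ≤ δ := by rw [abs_le]; constructor <;> [linarith; linarith [ht.2]]
      have hd2 : capM d t - capM d 1 ≤ ε := le_trans (le_abs_self _)
        (hω t ht 1 (by norm_num) h1)
      have := empM_nonneg X' w t
      have := capM_one d
      have := disc_nonneg hd X
      linarith

/-- the spherical cap discrepancy is continuous on `(S^{d-1})^N`. -/
theorem disc_continuous {d N : ℕ} (hd : 2 ≤ d) (hN : 0 < N) :
    Continuous (fun X : Fin N → Metric.sphere (0 : EuclideanSpace ℝ (Fin d)) 1 =>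
      disc (fun i => (X i : EuclideanSpace ℝ (Fin d)))) := by
  have hd1 : 1 ≤ d := le_trans (by norm_num) hd
  rw [Metric.continuous_iff]
  intro X ε hε
  -- modulus of continuity for capM on [-1,1]
  have hUC : UniformContinuousOn (capM d) (Icc (-1:ℝ) 1) :=
    (isCompact_Icc).uniformContinuousOn_of_continuous (capM_continuous d).continuousOn
  rw [Metric.uniformContinuousOn_iff] at hUC
  obtain ⟨δ, hδ, hδ'⟩ := hUC (ε/4) (by linarith)
  have hω : ∀ s ∈ Icc (-1:ℝ) 1, ∀ t ∈ Icc (-1:ℝ) 1, |s - t| ≤ δ/2 →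
      |capM d s - capM d t| ≤ ε/4 := by
    intro s hs t ht hst
    have : dist s t < δ := by rw [Real.dist_eq]; linarith
    exact le_of_lt (by simpa [Real.dist_eq] using hδ' s hs t ht this)
  refine ⟨δ/2, by linarith, fun Y hY => ?_⟩
  have hclose : ∀ (A B : Fin N → Metric.sphere (0 : EuclideanSpace ℝ (Fin d)) 1),
      dist A B < δ/2 → ∀ i, ‖(A i : EuclideanSpace ℝ (Fin d)) - (B i : EuclideanSpace ℝ (Fin d))‖ ≤ δ/2 := by
    intro A B hAB i
    rw [← dist_eq_norm]
    calc dist (A i : EuclideanSpace ℝ (Fin d)) (B i : EuclideanSpace ℝ (Fin d))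
        = dist (A i) (B i) := (Subtype.dist_eq _ _).symm
      _ ≤ dist A B := dist_le_pi_dist A B i
      _ ≤ δ/2 := le_of_lt hAB
  have hXnorm : ∀ (A : Fin N → Metric.sphere (0 : EuclideanSpace ℝ (Fin d)) 1) i,
      ‖(A i : EuclideanSpace ℝ (Fin d))‖ = 1 := fun A i =>
    by simpa using mem_sphere_zero_iff_norm.mp (A i).2
  have h1 : disc (fun i => (Y i : EuclideanSpace ℝ (Fin d))) ≤
      disc (fun i => (X i : EuclideanSpace ℝ (Fin d))) + ε/4 :=
    disc_le_disc_add hd1 (by linarith) hω _ _ (hXnorm X)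
      (hclose X Y (by rw [dist_comm] at hY; exact hY))
  have h2 : disc (fun i => (X i : EuclideanSpace ℝ (Fin d))) ≤
      disc (fun i => (Y i : EuclideanSpace ℝ (Fin d))) + ε/4 :=
    disc_le_disc_add hd1 (by linarith) hω _ _ (hXnorm Y) (hclose Y X hY)
  rw [Real.dist_eq, abs_lt]
  exact ⟨by linarith, by linarith⟩
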